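/- arXiv:2405.10223 — 5 statements merged into one kernel-verified Lean document; each statement's English description precedes it below -/
import Mathlib

section
/- For all real numbers μ, λ with 0 ≤ μ < λ, one has λ^μ · Γ(λ − μ) ≥ Γ(λ), where Γ is the real Gamma function. -/
open Real

/-- Key step for `μ ∈ (0,1)`, via log-convexity of `Γ`. -/
lemma gamma_key (μ lam : ℝ) (h0 : 0 < μ) (h1 : μ < 1) (hμlam : μ < lam) :
    Real.Gamma lam ≤ lam ^ μ * Real.Gamma (lam - μ) := by
  have hx : (0:ℝ) < lam - μ := by linarith
  have hx1 : (0:ℝ) < lam - μ + 1 := by linarith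
  have ha : (0:ℝ) < 1 - μ := by linarith
  have hG : 0 < Real.Gamma (lam - μ) := Real.Gamma_pos_of_pos hx
  have key := Real.Gamma_mul_add_mul_le_rpow_Gamma_mul_rpow_Gamma hx hx1 ha h0 (by ring)
  have hcomb : (1 - μ) * (lam - μ) + μ * (lam - μ + 1) = lam := by ring
  rw [hcomb] at key
  have hG1 : Real.Gamma (lam - μ + 1) = (lam - μ) * Real.Gamma (lam - μ) :=
    Real.Gamma_add_one hx.ne'
  rw [hG1] at key
  calc Real.Gamma lam
      ≤ Real.Gamma (lam - μ) ^ (1 - μ) * ((lam - μ) * Real.Gamma (lam - μ)) ^ μ := key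
    _ = (lam - μ) ^ μ * Real.Gamma (lam - μ) := by
        rw [Real.mul_rpow hx.le hG.le]
        rw [show Real.Gamma (lam - μ) ^ (1 - μ) * ((lam - μ) ^ μ * Real.Gamma (lam - μ) ^ μ)
            = (lam - μ) ^ μ * (Real.Gamma (lam - μ) ^ (1 - μ) * Real.Gamma (lam - μ) ^ μ) by ring]
        rw [← Real.rpow_add hG]
        norm_num
    _ ≤ lam ^ μ * Real.Gamma (lam - μ) := by
        gcongr
        linarith

lemma gamma_aux : ∀ n : ℕ, ∀ μ lam : ℝ, μ ≤ n → 0 ≤ μ → μ < lam →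
    Real.Gamma lam ≤ lam ^ μ * Real.Gamma (lam - μ) := by
  intro n
  induction n with
  | zero =>
    intro μ lam hn h0 hl
    have : μ = 0 := le_antisymm (by exact_mod_cast hn) h0
    subst this
    simp
  | succ n ih =>
    intro μ lam hn h0 hl
    rcases le_or_gt μ n with h | h
    · exact ih μ lam h h0 hl
    · rcases lt_or_ge μ 1 with hμ1 | hμ1
      · have h0' : 0 < μ := lt_of_le_of_lt (by exact_mod_cast Nat.zero_le n) h
        exact gamma_key μ lam h0' hμ1 hl
      · -- μ ≥ 1, recurse
        have hlam1 : (0:ℝ) < lam - 1 := by linarith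
        have hrec := ih (μ - 1) (lam - 1) (by push_cast at hn ⊢; linarith)
          (by linarith) (by linarith)
        have hG : Real.Gamma lam = (lam - 1) * Real.Gamma (lam - 1) := by
          have := Real.Gamma_add_one hlam1.ne'
          rw [show lam - 1 + 1 = lam by ring] at this
          rw [this]
        have hGpos : 0 < Real.Gamma (lam - μ) := Real.Gamma_pos_of_pos (by linarith)
        have hsub : lam - 1 - (μ - 1) = lam - μ := by ring
        rw [hsub] at hrec
        calc Real.Gamma lam = (lam - 1) * Real.Gamma (lam - 1) := hG
          _ ≤ (lam - 1) * ((lam - 1) ^ (μ - 1) * Real.Gamma (lam - μ)) := by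
              gcongr <;> linarith
          _ = (lam - 1) ^ μ * Real.Gamma (lam - μ) := by
              rw [← mul_assoc]
              congr 1
              rw [show (lam - 1) * (lam - 1) ^ (μ - 1)
                  = (lam - 1) ^ (1:ℝ) * (lam - 1) ^ (μ - 1) by rw [Real.rpow_one]]
              rw [← Real.rpow_add hlam1]
              ring_nf
          _ ≤ lam ^ μ * Real.Gamma (lam - μ) := by
              gcongr <;> linarith

/-- For all real numbers `μ, λ` with `0 ≤ μ < λ`, one has
`λ ^ μ * Γ(λ - μ) ≥ Γ(λ)`, where `Γ` is the real Gamma function. -/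
theorem stmt_1 (μ lam : ℝ) (hμ : 0 ≤ μ) (hμlam : μ < lam) :
    lam ^ μ * Real.Gamma (lam - μ) ≥ Real.Gamma lam := by
  exact gamma_aux ⌈μ⌉₊ μ lam (Nat.le_ceil μ) hμ hμlam
end

section
/- Let (Ω, P) be a probability space and let Y₁, …, Y_N (N ≥ 1) be independent, identically distributed random variables with values in the interval [0, 1]. Let p ∈ [0, 1] satisfy p ≥ E[Y₁]. Then P( (1/N) · Σ_{i=1}^N Y_i ≥ 3p ) ≤ e^{−pN}. -/
open MeasureTheory ProbabilityTheory

/-! Chernoff's method with parameter `t = 1`. By convexity of `exp`, a `[0, 1]`-valued variable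
satisfies `exp Y ≤ 1 + (e - 1) Y`, so its moment generating function at `1` is at most
`1 + (e - 1) E[Y] ≤ exp ((e - 1) p)`. Independence multiplies these bounds, and Markov's inequality
applied to `exp (∑ Y i)` gives `P(∑ Y i ≥ 3pN) ≤ exp (-3pN + (e - 1) pN) ≤ exp (-pN)`, as `e ≤ 3`. -/

lemma Real.exp_mul_le_one_add_mul (t : ℝ) {y : ℝ} (hy : y ∈ Set.Icc (0 : ℝ) 1) :
    Real.exp (t * y) ≤ 1 + (Real.exp t - 1) * y := by
  have h := convexOn_exp.2 (Set.mem_univ 0) (Set.mem_univ t) (sub_nonneg.2 hy.2) hy.1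
    (sub_add_cancel 1 y)
  simp only [smul_eq_mul, mul_zero, zero_add, Real.exp_zero, mul_one] at h
  rw [mul_comm]
  linarith

namespace ProbabilityTheory

variable {Ω ι : Type*} [MeasurableSpace Ω] {μ : Measure Ω}

lemma mgf_le_exp_mul_integral_of_mem_Icc [IsProbabilityMeasure μ] {X : Ω → ℝ}
    (hm : AEMeasurable X μ) (hb : ∀ᵐ ω ∂μ, X ω ∈ Set.Icc 0 1) (t : ℝ) :
    mgf X μ t ≤ Real.exp ((Real.exp t - 1) * μ[X]) := by
  have hX : Integrable X μ := Integrable.of_mem_Icc 0 1 hm hb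
  calc mgf X μ t ≤ ∫ ω, (1 + (Real.exp t - 1) * X ω) ∂μ :=
        integral_mono_ae (integrable_exp_mul_of_mem_Icc hm hb)
          ((integrable_const 1).add (hX.const_mul _))
          (hb.mono fun ω hω => Real.exp_mul_le_one_add_mul t hω)
    _ = (Real.exp t - 1) * μ[X] + 1 := by
        rw [integral_add (integrable_const 1) (hX.const_mul _), integral_const_mul]
        simp [add_comm]
    _ ≤ Real.exp ((Real.exp t - 1) * μ[X]) := Real.add_one_le_exp _

lemma iIndepFun.mgf_sum_le_of_mem_Icc {X : ι → Ω → ℝ} (hindep : iIndepFun X μ)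
    (hm : ∀ i, Measurable (X i)) (hb : ∀ i, ∀ᵐ ω ∂μ, X i ω ∈ Set.Icc 0 1) (s : Finset ι)
    (t : ℝ) :
    mgf (∑ i ∈ s, X i) μ t ≤ Real.exp ((Real.exp t - 1) * ∑ i ∈ s, μ[X i]) := by
  have := hindep.isProbabilityMeasure
  rw [hindep.mgf_sum hm, Finset.mul_sum, Real.exp_sum]
  exact Finset.prod_le_prod (fun _ _ => mgf_nonneg)
    fun i _ => mgf_le_exp_mul_integral_of_mem_Icc (hm i).aemeasurable (hb i) t

lemma iIndepFun.measureReal_le_sum_le_of_mem_Icc {X : ι → Ω → ℝ} (hindep : iIndepFun X μ)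
    (hm : ∀ i, Measurable (X i)) (hb : ∀ i, ∀ᵐ ω ∂μ, X i ω ∈ Set.Icc 0 1) (s : Finset ι)
    {t : ℝ} (ht : 0 ≤ t) (a : ℝ) :
    μ.real {ω | a ≤ ∑ i ∈ s, X i ω} ≤
      Real.exp (-t * a + (Real.exp t - 1) * ∑ i ∈ s, μ[X i]) := by
  have := hindep.isProbabilityMeasure
  have hint : Integrable (fun ω => Real.exp (t * (∑ i ∈ s, X i) ω)) μ :=
    hindep.integrable_exp_mul_sum hm
      fun i _ => integrable_exp_mul_of_mem_Icc (hm i).aemeasurable (hb i)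
  have hchernoff := measure_ge_le_exp_mul_mgf a ht hint
  simp only [Finset.sum_apply] at hchernoff
  rw [Real.exp_add]
  exact hchernoff.trans (mul_le_mul_of_nonneg_left
    (hindep.mgf_sum_le_of_mem_Icc hm hb s t) (Real.exp_pos _).le)

end ProbabilityTheory

/-- Let `(Ω, P)` be a probability space and `Y 1, …, Y N` (with `N ≥ 1`) independent,
identically distributed random variables with values in `[0, 1]`. Let `p ∈ [0, 1]`
satisfy `p ≥ E[Y 1]`. Then `P((1/N) ∑ Y i ≥ 3p) ≤ exp (-p * N)`. -/
theorem stmt_2 {Ω : Type*} [MeasurableSpace Ω] (P : Measure Ω) [IsProbabilityMeasure P]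
    (N : ℕ) (hN : 1 ≤ N) (Y : Fin N → Ω → ℝ)
    (hmeas : ∀ i, Measurable (Y i))
    (hindep : iIndepFun Y P)
    (hident : ∀ i, IdentDistrib (Y i) (Y ⟨0, hN⟩) P P)
    (hval : ∀ i ω, Y i ω ∈ Set.Icc (0 : ℝ) 1)
    (p : ℝ) (hp : p ∈ Set.Icc (0 : ℝ) 1) (hpE : P[Y ⟨0, hN⟩] ≤ p) :
    P {ω | 3 * p ≤ (1 / (N : ℝ)) * ∑ i, Y i ω} ≤ ENNReal.ofReal (Real.exp (-(p * N))) := by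
  have hNpos : (0 : ℝ) < N := by exact_mod_cast hN
  have hset : {ω | 3 * p ≤ (1 / (N : ℝ)) * ∑ i, Y i ω} = {ω | 3 * p * N ≤ ∑ i, Y i ω} := by
    ext ω
    simp only [Set.mem_ofPred_eq, one_div, inv_mul_eq_div, le_div_iff₀ hNpos]
  have hmean : ∑ i, P[Y i] ≤ N * p := by
    simpa [(hident _).integral_eq] using mul_le_mul_of_nonneg_left hpE hNpos.le
  have hchernoff := hindep.measureReal_le_sum_le_of_mem_Icc hmeas
    (fun i => Filter.Eventually.of_forall (hval i)) Finset.univ zero_le_one (3 * p * N)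
  have hexponent : -1 * (3 * p * N) + (Real.exp 1 - 1) * ∑ i, P[Y i] ≤ -(p * N) := by
    have he : Real.exp 1 - 1 ≤ 2 := by linarith [Real.exp_one_lt_d9]
    have he' : 0 ≤ Real.exp 1 - 1 := by linarith [Real.add_one_le_exp 1]
    nlinarith [mul_nonneg hp.1 hNpos.le, mul_le_mul_of_nonneg_left hmean he']
  rw [hset, ← ofReal_measureReal]
  exact ENNReal.ofReal_le_ofReal (hchernoff.trans (Real.exp_le_exp.2 hexponent))
end

section
/- There exists a universal constant c > 0 such that for every n ≥ 2, every integer k with 1 ≤ k ≤ n−1, and every finite set P ⊆ ℝⁿ with |x| ≤ n for all x ∈ P and cardinality at most n^{k/2 + 5}, the convex hull K = conv(P) satisfies vol_n(K)^{1/n} ≤ c · √( k · log(n) ). -/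
/-!
Maurey's empirical method. If `z ∈ conv P` and `A` is the error `y₁ + ⋯ + yₘ - m z` of some
points of `P`, then some `y ∈ P` satisfies `⟪A, y - z⟫ ≤ 0`, so adding `y` increases `‖A‖²` by at
most `‖y - z‖² ≤ (2R)²`. Hence every point of `conv P` lies within `2R/√m` of an average of `m`
points of `P`, and `conv P` is covered by `|P|^m` balls of radius `2R/√m`. Since
`vol B(r)^{1/n} ≤ r √(2πe/n)` (Stirling-type lower bound for `Γ(n/2 + 1)`), the choice
`m = ⌈n / log|P|⌉` gives `vol(conv P)^{1/n} ≲ R √(log|P|) / n`; when `log|P| > n` the trivial bound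
`conv P ⊆ B(R)` is already as good. For `R = n` and `log|P| ≤ (k/2 + 5) log n` this is
`O(√(k log n))`.
-/

open MeasureTheory Metric Real RealInnerProductSpace Finset
open scoped Nat

theorem convexHull_subset_closedBall_zero {E : Type*} [NormedAddCommGroup E] [NormedSpace ℝ E]
    {s : Set E} {R : ℝ} (hR : ∀ x ∈ s, ‖x‖ ≤ R) : convexHull ℝ s ⊆ closedBall 0 R :=
  convexHull_min (fun x hx => mem_closedBall_zero_iff.2 (hR x hx)) (convex_closedBall 0 R)

section Maurey

variable {E : Type*} [NormedAddCommGroup E] [InnerProductSpace ℝ E]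

theorem exists_sum_sub_smul_norm_sq_le {s : Set E} {z : E} (hz : z ∈ convexHull ℝ s) {r : ℝ}
    (hr : ∀ y ∈ s, ‖y - z‖ ≤ r) (m : ℕ) :
    ∃ f : Fin m → E, (∀ j, f j ∈ s) ∧ ‖∑ j, f j - (m : ℝ) • z‖ ^ 2 ≤ m * r ^ 2 := by
  induction m with
  | zero => exact ⟨Fin.elim0, fun j => j.elim0, by simp⟩
  | succ m ih =>
    obtain ⟨f, hfs, hf⟩ := ih
    set A := ∑ j, f j - (m : ℝ) • z
    obtain ⟨y, hys, hy⟩ : ∃ y ∈ s, ⟪A, y⟫ ≤ ⟪A, z⟫ :=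
      ((innerₛₗ ℝ A).concaveOn (convex_convexHull ℝ s)).exists_le_of_mem_convexHull
        (subset_convexHull ℝ s) hz
    refine ⟨Fin.cons y f, Fin.cases hys hfs, ?_⟩
    have hsum : ∑ j, (Fin.cons y f : Fin (m + 1) → E) j - ((m + 1 : ℕ) : ℝ) • z
        = A + (y - z) := by
      simp only [Fin.sum_cons, Nat.cast_succ, add_smul, one_smul, A]
      abel
    have hyz := hr y hys
    rw [hsum, norm_add_sq_real, inner_sub_right, Nat.cast_succ]
    nlinarith [norm_nonneg (y - z)]

theorem convexHull_subset_iUnion_closedBall (P : Finset E) {R : ℝ} (hR : ∀ x ∈ P, ‖x‖ ≤ R)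
    {m : ℕ} (hm : m ≠ 0) :
    convexHull ℝ (P : Set E) ⊆
      ⋃ f : Fin m → P, closedBall ((m : ℝ)⁻¹ • ∑ j, (f j : E)) (2 * R / √m) := by
  intro z hz
  have hzR : ‖z‖ ≤ R := mem_closedBall_zero_iff.1 (convexHull_subset_closedBall_zero hR hz)
  obtain ⟨f, hfP, hf⟩ := exists_sum_sub_smul_norm_sq_le hz
    (fun y hy => (norm_sub_le y z).trans (add_le_add (hR y hy) hzR)) m
  refine Set.mem_iUnion.2 ⟨fun j => ⟨f j, hfP j⟩, ?_⟩
  have hR0 : 0 ≤ R := (norm_nonneg z).trans hzR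
  have hm0 : (0 : ℝ) < m := by positivity
  have hdiff : (m : ℝ)⁻¹ • ∑ j, f j - z = (m : ℝ)⁻¹ • (∑ j, f j - (m : ℝ) • z) := by
    rw [smul_sub, smul_smul, inv_mul_cancel₀ hm0.ne', one_smul]
  rw [mem_closedBall, dist_comm, dist_eq_norm, hdiff, ← pow_le_pow_iff_left₀ (norm_nonneg _)
    (by positivity) two_ne_zero, norm_smul, mul_pow, div_pow, sq_sqrt hm0.le,
    norm_of_nonneg (by positivity)]
  calc (m : ℝ)⁻¹ ^ 2 * ‖∑ j, f j - (m : ℝ) • z‖ ^ 2 ≤ (m : ℝ)⁻¹ ^ 2 * (m * (R + R) ^ 2) := by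
        gcongr
    _ = (2 * R) ^ 2 / m := by field_simp; ring

theorem measure_convexHull_le_card_pow_mul [MeasurableSpace E] [BorelSpace E] (μ : Measure E)
    [μ.IsAddHaarMeasure] (P : Finset E) {R : ℝ} (hR : ∀ x ∈ P, ‖x‖ ≤ R) {m : ℕ} (hm : m ≠ 0) :
    μ (convexHull ℝ (P : Set E)) ≤ (#P : ENNReal) ^ m * μ (closedBall 0 (2 * R / √m)) :=
  calc μ (convexHull ℝ (P : Set E))
      ≤ ∑ f : Fin m → P, μ (closedBall ((m : ℝ)⁻¹ • ∑ j, (f j : E)) (2 * R / √m)) :=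
        (measure_mono (convexHull_subset_iUnion_closedBall P hR hm)).trans
          (measure_iUnion_fintype_le _ _)
    _ = (#P : ENNReal) ^ m * μ (closedBall 0 (2 * R / √m)) := by
        simp only [Measure.addHaar_closedBall_center, Finset.sum_const, Finset.card_univ,
          Fintype.card_fun, Fintype.card_coe, Fintype.card_fin, nsmul_eq_mul, Nat.cast_pow]

end Maurey

theorem Real.Gamma_succ_div_two_le_Gamma_div_two_add_one {n : ℕ} (hn : 2 ≤ n) :
    Gamma ((n + 1) / 2) ≤ Gamma (n / 2 + 1) := by
  obtain rfl | hn3 := hn.eq_or_lt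
  · norm_num
    exact Gamma_three_div_two_lt_one.le
  · have hn3' : (3 : ℝ) ≤ n := by exact_mod_cast hn3
    exact Gamma_strictMonoOn_Ici.monotoneOn (Set.mem_Ici.2 (by linarith))
      (Set.mem_Ici.2 (by linarith)) (by linarith)

theorem Real.sqrt_div_two_mul_exp_one_pow_le_Gamma {n : ℕ} (hn : 2 ≤ n) :
    √(n / (2 * exp 1)) ^ n ≤ Gamma (n / 2 + 1) := by
  have hG : 0 < Gamma (n / 2 + 1) := Gamma_pos_of_pos (by positivity)
  have hdup : Gamma ((n + 1) / 2) * Gamma (n / 2 + 1) = n ! * 2 ^ (-(n : ℝ)) * √π := by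
    have := Gamma_mul_Gamma_add_half (((n : ℝ) + 1) / 2)
    rwa [show ((n : ℝ) + 1) / 2 + 1 / 2 = n / 2 + 1 by ring,
      show 2 * (((n : ℝ) + 1) / 2) = n + 1 by ring, show (1 : ℝ) - (n + 1) = -n by ring,
      Gamma_nat_eq_factorial] at this
  have hfac : (n / exp 1) ^ n ≤ n ! * √π := by
    have hpi : 1 ≤ √π := one_le_sqrt.2 (by linarith [pi_gt_three])
    calc (n / exp 1) ^ n ≤ n ! * 1 := by
          rw [mul_one, div_pow, ← exp_nat_mul, mul_one, div_le_iff₀ (exp_pos _), mul_comm,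
            ← div_le_iff₀ (by positivity)]
          exact pow_div_factorial_le_exp _ (Nat.cast_nonneg n) n
      _ ≤ n ! * √π := by gcongr
  rw [← pow_le_pow_iff_left₀ (by positivity) hG.le two_ne_zero, ← pow_mul, mul_comm n, pow_mul,
    sq_sqrt (by positivity)]
  calc (n / (2 * exp 1)) ^ n = 2 ^ (-(n : ℝ)) * (n / exp 1) ^ n := by
        rw [rpow_neg two_pos.le, rpow_natCast, div_pow, div_pow, mul_pow]; field_simp
    _ ≤ 2 ^ (-(n : ℝ)) * (n ! * √π) := by gcongr
    _ = Gamma ((n + 1) / 2) * Gamma (n / 2 + 1) := by rw [hdup]; ring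
    _ ≤ Gamma (n / 2 + 1) ^ 2 := by
        rw [sq]; gcongr; exact Gamma_succ_div_two_le_Gamma_div_two_add_one hn

theorem EuclideanSpace.volume_closedBall_le {n : ℕ} (hn : 2 ≤ n) (x : EuclideanSpace ℝ (Fin n))
    {r : ℝ} (hr : 0 ≤ r) :
    volume (closedBall x r) ≤ ENNReal.ofReal ((r * √(2 * π * exp 1 / n)) ^ n) := by
  have : Nonempty (Fin n) := ⟨⟨0, by omega⟩⟩
  have hG : 0 < Gamma (n / 2 + 1) := Gamma_pos_of_pos (by positivity)
  rw [EuclideanSpace.volume_closedBall, Fintype.card_fin, ← ENNReal.ofReal_pow hr,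
    ← ENNReal.ofReal_mul (by positivity), mul_pow]
  gcongr
  rw [div_le_iff₀ hG]
  calc √π ^ n = (√(2 * π * exp 1 / n) * √(n / (2 * exp 1))) ^ n := by
        rw [← sqrt_mul (by positivity)]
        congr 2
        field_simp
    _ ≤ √(2 * π * exp 1 / n) ^ n * Gamma (n / 2 + 1) := by
        rw [mul_pow]
        gcongr
        exact sqrt_div_two_mul_exp_one_pow_le_Gamma hn

theorem Real.sqrt_div_div_sqrt_le {c n L m : ℝ} (hc : 0 ≤ c) (hn : 0 < n) (hm : 0 < m)
    (h : n ≤ L * m) : √(c / n) / √m ≤ √(c * L) / n := by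
  have hL : 0 ≤ L := nonneg_of_mul_nonneg_left (hn.le.trans h) hm
  rw [← pow_le_pow_iff_left₀ (by positivity) (by positivity) two_ne_zero, div_pow, div_pow,
    sq_sqrt (div_nonneg hc hn.le), sq_sqrt hm.le, sq_sqrt (mul_nonneg hc hL), div_div,
    div_le_div_iff₀ (by positivity) (by positivity)]
  have := mul_le_mul_of_nonneg_left h (mul_nonneg hc hn.le)
  nlinarith

theorem volume_convexHull_le_of_card_le_exp {n : ℕ} (hn : 2 ≤ n)
    (P : Finset (EuclideanSpace ℝ (Fin n))) {R L : ℝ} (hR0 : 0 ≤ R) (hR : ∀ x ∈ P, ‖x‖ ≤ R)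
    (hL : 0 < L) (hP : (#P : ℝ) ≤ exp L) :
    volume (convexHull ℝ (P : Set (EuclideanSpace ℝ (Fin n)))) ≤
      ENNReal.ofReal ((2 * exp 2 * R * √(2 * π * exp 1 * L) / n) ^ n) := by
  have hn0 : (0 : ℝ) < n := by positivity
  have hc : 0 ≤ 2 * π * exp 1 := by positivity
  rcases le_or_gt L n with hLn | hnL
  · -- `m = ⌈n / L⌉` keeps `|P|^m ≤ e^{Lm} ≤ e^{2n}` while making the balls small
    set m := ⌈n / L⌉₊
    have hnm : n / L ≤ m := Nat.le_ceil _
    have hm0 : (0 : ℝ) < m := (div_pos hn0 hL).trans_le hnm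
    have hLm : L * m ≤ 2 * n := by
      have := Nat.ceil_lt_add_one (div_pos hn0 hL).le
      have : L * (n / L) = n := by field_simp
      nlinarith
    have hcard : (#P : ENNReal) ^ m ≤ ENNReal.ofReal (exp 2 ^ n) := by
      rw [← ENNReal.ofReal_natCast, ← ENNReal.ofReal_pow (Nat.cast_nonneg _)]
      gcongr
      calc (#P : ℝ) ^ m ≤ exp L ^ m := by gcongr
        _ ≤ exp 2 ^ n := by
          rw [← exp_nat_mul, ← exp_nat_mul, exp_le_exp]
          linarith
    calc volume (convexHull ℝ (P : Set (EuclideanSpace ℝ (Fin n))))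
        ≤ (#P : ENNReal) ^ m * volume (closedBall 0 (2 * R / √m)) :=
          measure_convexHull_le_card_pow_mul volume P hR (Nat.cast_pos.1 hm0).ne'
      _ ≤ ENNReal.ofReal (exp 2 ^ n) *
            ENNReal.ofReal ((2 * R / √m * √(2 * π * exp 1 / n)) ^ n) := by
          gcongr
          exact EuclideanSpace.volume_closedBall_le hn 0 (by positivity)
      _ = ENNReal.ofReal ((exp 2 * (2 * R * (√(2 * π * exp 1 / n) / √m))) ^ n) := by
          rw [← ENNReal.ofReal_mul (by positivity), mul_pow]
          ring_nf
      _ ≤ ENNReal.ofReal ((2 * exp 2 * R * √(2 * π * exp 1 * L) / n) ^ n) := by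
          gcongr ENNReal.ofReal (?_ ^ n)
          calc exp 2 * (2 * R * (√(2 * π * exp 1 / n) / √m))
              ≤ exp 2 * (2 * R * (√(2 * π * exp 1 * L) / n)) := by
                gcongr exp 2 * (2 * R * ?_)
                exact sqrt_div_div_sqrt_le hc hn0 hm0 (by rwa [div_le_iff₀' hL] at hnm)
            _ = _ := by ring
  · calc volume (convexHull ℝ (P : Set (EuclideanSpace ℝ (Fin n))))
        ≤ ENNReal.ofReal ((R * √(2 * π * exp 1 / n)) ^ n) :=
          (measure_mono (convexHull_subset_closedBall_zero hR)).trans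
            (EuclideanSpace.volume_closedBall_le hn 0 hR0)
      _ ≤ ENNReal.ofReal ((2 * exp 2 * R * √(2 * π * exp 1 * L) / n) ^ n) := by
          gcongr ENNReal.ofReal (?_ ^ n)
          have h1 := sqrt_div_div_sqrt_le (L := L) hc hn0 one_pos (by rw [mul_one]; exact hnL.le)
          rw [sqrt_one, div_one] at h1
          have h2 : (1 : ℝ) ≤ 2 * exp 2 := by linarith [add_one_le_exp 2]
          calc R * √(2 * π * exp 1 / n) ≤ 1 * (R * (√(2 * π * exp 1 * L) / n)) := by
                rw [one_mul]; gcongr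
            _ ≤ 2 * exp 2 * (R * (√(2 * π * exp 1 * L) / n)) := by gcongr
            _ = _ := by ring

theorem ENNReal.toReal_rpow_one_div_le_of_le_ofReal_pow {a : ENNReal} {b : ℝ} (hb : 0 ≤ b)
    {n : ℕ} (hn : n ≠ 0) (h : a ≤ ENNReal.ofReal (b ^ n)) : a.toReal ^ ((1 : ℝ) / n) ≤ b := by
  calc a.toReal ^ ((1 : ℝ) / n) ≤ (b ^ n) ^ ((1 : ℝ) / n) := by
        gcongr
        exact ENNReal.toReal_le_of_le_ofReal (by positivity) h
    _ = b := by rw [one_div, Real.pow_rpow_inv_natCast hb hn]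

theorem two_mul_exp_two_mul_sqrt_le {k l : ℝ} (hk : 1 ≤ k) (hl : 0 ≤ l) :
    2 * exp 2 * √(2 * π * exp 1 * ((k / 2 + 5) * l)) ≤ 192 * √(k * l) := by
  have he : exp 1 ≤ 3 := by linarith [exp_one_lt_d9]
  have he2 : exp 2 ≤ 8 := by
    rw [show (2 : ℝ) = 1 + 1 by norm_num, exp_add]
    nlinarith [exp_pos 1, exp_one_lt_d9]
  have hsqrt : √(2 * π * exp 1 * ((k / 2 + 5) * l)) ≤ 12 * √(k * l) := by
    rw [show (12 : ℝ) = √(12 ^ 2) by rw [sqrt_sq (by norm_num)], ← sqrt_mul (by norm_num)]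
    apply sqrt_le_sqrt
    have hπe : π * exp 1 ≤ 4 * 3 := mul_le_mul pi_le_four he (exp_pos 1).le (by norm_num)
    have : 2 * π * exp 1 * (k / 2 + 5) ≤ 12 ^ 2 * k := by nlinarith [pi_pos, exp_pos 1]
    nlinarith
  calc 2 * exp 2 * √(2 * π * exp 1 * ((k / 2 + 5) * l)) ≤ 2 * 8 * (12 * √(k * l)) := by
        gcongr
    _ = 192 * √(k * l) := by ring

/-- For every finite set `P ⊆ ℝⁿ` of at most `n^{k/2+5}` points of norm at most `n`,
the convex hull `K = conv(P)` satisfies `vol(K)^{1/n} ≤ c √(k log n)`. -/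
theorem stmt_9 :
    ∃ c : ℝ, 0 < c ∧ ∀ n : ℕ, 2 ≤ n → ∀ k : ℕ, 1 ≤ k → k ≤ n - 1 →
      ∀ P : Finset (EuclideanSpace ℝ (Fin n)),
        (∀ x ∈ P, ‖x‖ ≤ (n : ℝ)) → (P.card : ℝ) ≤ (n : ℝ) ^ ((k : ℝ) / 2 + 5) →
        (volume (convexHull ℝ (P : Set (EuclideanSpace ℝ (Fin n))))).toReal ^ ((1 : ℝ) / n)
          ≤ c * Real.sqrt (k * Real.log n) := by
  refine ⟨192, by norm_num, fun n hn k hk _ P hP hcard => ?_⟩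
  have hn0 : (0 : ℝ) < n := by positivity
  have hlog : 0 < log n := log_pos (by exact_mod_cast hn)
  have hvol := volume_convexHull_le_of_card_le_exp hn P hn0.le hP (L := (k / 2 + 5) * log n)
    (by positivity) (by rwa [rpow_def_of_pos hn0, mul_comm] at hcard)
  rw [mul_div_right_comm, mul_div_cancel_right₀ _ hn0.ne'] at hvol
  exact (ENNReal.toReal_rpow_one_div_le_of_le_ofReal_pow (by positivity) (by omega) hvol).trans
    (two_mul_exp_two_mul_sqrt_le (by exact_mod_cast hk) hlog.le)
end

section
/- Let n ≥ 1 and let K ⊆ ℝⁿ be a convex set containing the Euclidean ball √n · 𝔹_n of radius √n centered at the origin. Let p₁, …, p_M ∈ K (M ≥ 1) and define f(x) = (1/M) · Σ_{i=1}^M γ_n(x − p_i). Then ∫_{3K} f(x) dx ≥ 3/4. -/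
/-!
Each translate `γ_n(· - pᵢ)` already puts mass at least `3/4` on `3K`, and `f` is their average.
Since `K` is convex and contains both `pᵢ` and `√n 𝔹_n`, the dilate `3K = K + 2K` contains the ball
`pᵢ + 2√n 𝔹_n`. A standard Gaussian vector `X` has `𝔼|X|² = n`, so by Chebyshev's inequality
`ℙ(|X| > 2√n) ≤ n / (4n) = 1/4`.
-/

open MeasureTheory Metric Pointwise Real ProbabilityTheory

lemma integrable_exp_neg_sq_div_two : Integrable fun x : ℝ => exp (-x ^ 2 / 2) := by
  simpa only [neg_div, neg_mul, one_div, inv_mul_eq_div] using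
    integrable_exp_neg_mul_sq (by norm_num : (0 : ℝ) < 1 / 2)

lemma integral_exp_neg_sq_div_two : ∫ x : ℝ, exp (-x ^ 2 / 2) = √(2 * π) := by
  have h := integral_gaussian (1 / 2)
  simp only [neg_mul, one_div, inv_mul_eq_div, div_inv_eq_mul] at h
  simpa [neg_div, mul_comm] using h

lemma integrable_sq_mul_exp_neg_sq_div_two :
    Integrable fun x : ℝ => x ^ 2 * exp (-x ^ 2 / 2) := by
  simpa only [neg_div, neg_mul, one_div, inv_mul_eq_div, rpow_two] using
    integrable_rpow_mul_exp_neg_mul_sq (by norm_num : (0 : ℝ) < 1 / 2)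
      (by norm_num : (-1 : ℝ) < 2)

-- The second moment of `gaussianReal 0 1` is its variance `1`.
lemma integral_sq_mul_exp_neg_sq_div_two :
    ∫ x : ℝ, x ^ 2 * exp (-x ^ 2 / 2) = √(2 * π) := by
  have hvar : ∫ x, gaussianPDFReal 0 1 x • x ^ 2 = 1 := by
    rw [← integral_gaussianReal_eq_integral_smul one_ne_zero,
      ← variance_of_integral_eq_zero aemeasurable_id' integral_id_gaussianReal,
      variance_fun_id_gaussianReal, NNReal.coe_one]
  calc ∫ x : ℝ, x ^ 2 * exp (-x ^ 2 / 2)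
      = √(2 * π) * ∫ x, gaussianPDFReal 0 1 x • x ^ 2 := by
        rw [← integral_const_mul]
        congr 1 with x
        have : 0 < √(2 * π) := by positivity
        simp only [gaussianPDFReal, smul_eq_mul, NNReal.coe_one, mul_one, sub_zero]
        field_simp
    _ = √(2 * π) := by rw [hvar, mul_one]

lemma integral_ite_sq_mul_exp_neg_sq_div_two (p : Prop) [Decidable p] :
    ∫ t : ℝ, (if p then t ^ 2 else 1) * exp (-t ^ 2 / 2) = √(2 * π) := by
  split_ifs
  · exact integral_sq_mul_exp_neg_sq_div_two
  · simpa only [one_mul] using integral_exp_neg_sq_div_two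

lemma integrable_ite_sq_mul_exp_neg_sq_div_two (p : Prop) [Decidable p] :
    Integrable fun t : ℝ => (if p then t ^ 2 else 1) * exp (-t ^ 2 / 2) := by
  split_ifs
  · exact integrable_sq_mul_exp_neg_sq_div_two
  · simpa only [one_mul] using integrable_exp_neg_sq_div_two

lemma two_pi_rpow_neg_div_two_mul_sqrt_pow (n : ℕ) :
    (2 * π) ^ (-(n : ℝ) / 2) * √(2 * π) ^ n = 1 := by
  rw [sqrt_eq_rpow, ← rpow_mul_natCast (by positivity), ← rpow_add (by positivity)]
  simp only [neg_div, one_div, neg_add_cancel, inv_mul_eq_div, rpow_zero]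

section Product

variable {ι : Type*} [Fintype ι]

lemma integrable_prod_ite_sq_mul_exp_neg_sq_div_two [DecidableEq ι] (j : ι) :
    Integrable fun v : ι → ℝ => ∏ i, (if i = j then v i ^ 2 else 1) * exp (-v i ^ 2 / 2) :=
  Integrable.fintype_prod fun i => integrable_ite_sq_mul_exp_neg_sq_div_two (i = j)

lemma integral_prod_ite_sq_mul_exp_neg_sq_div_two [DecidableEq ι] (j : ι) :
    ∫ v : ι → ℝ, ∏ i, (if i = j then v i ^ 2 else 1) * exp (-v i ^ 2 / 2) =
      √(2 * π) ^ Fintype.card ι := by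
  rw [integral_fintype_prod_volume_eq_prod
    (fun i t => (if i = j then t ^ 2 else 1) * exp (-t ^ 2 / 2))]
  simp only [integral_ite_sq_mul_exp_neg_sq_div_two, Finset.prod_const, Finset.card_univ]

end Product

namespace EuclideanSpace

variable {ι : Type*} [Fintype ι]

lemma norm_toLp_sq (v : ι → ℝ) : ‖WithLp.toLp 2 v‖ ^ 2 = ∑ i, v i ^ 2 := by
  simp [EuclideanSpace.norm_sq_eq]

lemma exp_neg_norm_toLp_sq_div_two (v : ι → ℝ) :
    exp (-‖WithLp.toLp 2 v‖ ^ 2 / 2) = ∏ i, exp (-v i ^ 2 / 2) := by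
  rw [norm_toLp_sq, ← exp_sum, ← Finset.sum_div, Finset.sum_neg_distrib]

-- Each summand is a product of one-variable functions, so Fubini computes its integral.
lemma norm_toLp_sq_mul_exp [DecidableEq ι] (v : ι → ℝ) :
    ‖WithLp.toLp 2 v‖ ^ 2 * exp (-‖WithLp.toLp 2 v‖ ^ 2 / 2) =
      ∑ j, ∏ i, (if i = j then v i ^ 2 else 1) * exp (-v i ^ 2 / 2) := by
  simp only [Finset.prod_mul_distrib, Finset.prod_ite_eq', Finset.mem_univ, if_true,
    ← Finset.sum_mul, ← norm_toLp_sq, exp_neg_norm_toLp_sq_div_two]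

end EuclideanSpace

lemma Convex.closedBall_subset_smul {E : Type*} [NormedAddCommGroup E] [NormedSpace ℝ E]
    {K : Set E} (hK : Convex ℝ K) {r : ℝ} (hball : closedBall 0 r ⊆ K) {q : E} (hq : q ∈ K)
    {t : ℝ} (ht : 1 < t) : closedBall q ((t - 1) * r) ⊆ t • K := by
  have ht' : 0 < t - 1 := sub_pos.mpr ht
  calc closedBall q ((t - 1) * r) = {q} + (t - 1) • closedBall 0 r := by
        rw [smul_closedBall' ht'.ne', smul_zero, Real.norm_of_nonneg ht'.le,
          singleton_add_closedBall_zero]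
    _ ⊆ (1 : ℝ) • K + (t - 1) • K := by
        gcongr
        simpa using hq
    _ = t • K := by rw [← hK.add_smul zero_le_one ht'.le, add_sub_cancel]

section StdGaussianPDF

open EuclideanSpace

variable {ι : Type*} [Fintype ι]

variable (ι) in
noncomputable def stdGaussianPDF (x : EuclideanSpace ℝ ι) : ℝ :=
  (2 * π) ^ (-(Fintype.card ι : ℝ) / 2) * exp (-‖x‖ ^ 2 / 2)

lemma stdGaussianPDF_nonneg (x : EuclideanSpace ℝ ι) : 0 ≤ stdGaussianPDF ι x := by
  unfold stdGaussianPDF; positivity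

lemma integrable_stdGaussianPDF : Integrable (stdGaussianPDF ι) := by
  refine Integrable.const_mul ?_ _
  rw [← (PiLp.volume_preserving_toLp ι).integrable_comp_emb
    (MeasurableEquiv.toLp 2 _).measurableEmbedding]
  have h : Integrable fun v : ι → ℝ => ∏ i, exp (-v i ^ 2 / 2) :=
    Integrable.fintype_prod fun _ => integrable_exp_neg_sq_div_two
  simpa only [Function.comp_def, MeasurableEquiv.toLp_apply, exp_neg_norm_toLp_sq_div_two] using h

lemma integral_stdGaussianPDF : ∫ x, stdGaussianPDF ι x = 1 := by
  simp only [stdGaussianPDF]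
  rw [integral_const_mul, ← (PiLp.volume_preserving_toLp ι).integral_comp
    (MeasurableEquiv.toLp 2 _).measurableEmbedding]
  simp only [exp_neg_norm_toLp_sq_div_two]
  rw [integral_fintype_prod_volume_eq_pow (fun t : ℝ => exp (-t ^ 2 / 2)),
    integral_exp_neg_sq_div_two, two_pi_rpow_neg_div_two_mul_sqrt_pow]

lemma integrable_norm_sq_mul_stdGaussianPDF :
    Integrable fun x => ‖x‖ ^ 2 * stdGaussianPDF ι x := by
  classical
  simp only [stdGaussianPDF, mul_left_comm (‖_‖ ^ 2)]
  refine Integrable.const_mul ?_ _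
  rw [← (PiLp.volume_preserving_toLp ι).integrable_comp_emb
    (MeasurableEquiv.toLp 2 _).measurableEmbedding]
  have h : Integrable fun v : ι → ℝ =>
      ∑ j, ∏ i, (if i = j then v i ^ 2 else 1) * exp (-v i ^ 2 / 2) :=
    integrable_finsetSum _ fun j _ => integrable_prod_ite_sq_mul_exp_neg_sq_div_two j
  simpa only [Function.comp_def, MeasurableEquiv.toLp_apply, norm_toLp_sq_mul_exp] using h

lemma integral_norm_sq_mul_stdGaussianPDF :
    ∫ x, ‖x‖ ^ 2 * stdGaussianPDF ι x = Fintype.card ι := by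
  classical
  simp only [stdGaussianPDF, mul_left_comm (‖_‖ ^ 2)]
  rw [integral_const_mul, ← (PiLp.volume_preserving_toLp ι).integral_comp
    (MeasurableEquiv.toLp 2 _).measurableEmbedding]
  simp only [norm_toLp_sq_mul_exp]
  rw [integral_finsetSum _ fun j _ => integrable_prod_ite_sq_mul_exp_neg_sq_div_two j]
  simp only [integral_prod_ite_sq_mul_exp_neg_sq_div_two, Finset.sum_const, Finset.card_univ,
    nsmul_eq_mul]
  rw [mul_left_comm, two_pi_rpow_neg_div_two_mul_sqrt_pow, mul_one]

lemma sq_mul_setIntegral_compl_closedBall_stdGaussianPDF_le {r : ℝ} (hr : 0 ≤ r) :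
    r ^ 2 * ∫ x in (closedBall 0 r)ᶜ, stdGaussianPDF ι x ≤ Fintype.card ι := by
  rw [← integral_const_mul, ← integral_norm_sq_mul_stdGaussianPDF]
  calc ∫ x in (closedBall 0 r)ᶜ, r ^ 2 * stdGaussianPDF ι x
      ≤ ∫ x in (closedBall 0 r)ᶜ, ‖x‖ ^ 2 * stdGaussianPDF ι x := by
        refine setIntegral_mono_on (integrable_stdGaussianPDF.const_mul _).integrableOn
          integrable_norm_sq_mul_stdGaussianPDF.integrableOn measurableSet_closedBall.compl
          fun x hx => ?_
        have hrx : r < ‖x‖ := by simpa using hx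
        gcongr
        exact stdGaussianPDF_nonneg x
    _ ≤ ∫ x, ‖x‖ ^ 2 * stdGaussianPDF ι x :=
        setIntegral_le_integral integrable_norm_sq_mul_stdGaussianPDF
          (ae_of_all _ fun x => mul_nonneg (sq_nonneg _) (stdGaussianPDF_nonneg x))

lemma one_sub_card_div_sq_le_setIntegral_closedBall_stdGaussianPDF {r : ℝ} (hr : 0 < r) :
    1 - Fintype.card ι / r ^ 2 ≤ ∫ x in closedBall 0 r, stdGaussianPDF ι x := by
  have htail := sq_mul_setIntegral_compl_closedBall_stdGaussianPDF_le (ι := ι) hr.le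
  have htotal := integral_add_compl measurableSet_closedBall (integrable_stdGaussianPDF (ι := ι))
    (s := closedBall 0 r)
  rw [integral_stdGaussianPDF] at htotal
  have htail' : ∫ x in (closedBall 0 r)ᶜ, stdGaussianPDF ι x ≤ Fintype.card ι / r ^ 2 := by
    rwa [le_div_iff₀ (by positivity), mul_comm]
  linarith

lemma setIntegral_closedBall_stdGaussianPDF_sub (q : EuclideanSpace ℝ ι) (r : ℝ) :
    ∫ x in closedBall q r, stdGaussianPDF ι (x - q) =
      ∫ x in closedBall 0 r, stdGaussianPDF ι x := by
  have hpre : (· - q) ⁻¹' closedBall 0 r = closedBall q r := by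
    ext x; simp [dist_eq_norm]
  rw [← hpre, (measurePreserving_sub_right volume q).setIntegral_preimage_emb
    (measurableEmbedding_subRight q)]

lemma three_quarters_le_setIntegral_three_smul_stdGaussianPDF_sub [Nonempty ι]
    {K : Set (EuclideanSpace ℝ ι)} (hK : Convex ℝ K)
    (hball : closedBall 0 √(Fintype.card ι) ⊆ K) {q : EuclideanSpace ℝ ι} (hq : q ∈ K) :
    3 / 4 ≤ ∫ x in (3 : ℝ) • K, stdGaussianPDF ι (x - q) := by
  have hn : (0 : ℝ) < Fintype.card ι := by exact_mod_cast Fintype.card_pos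
  have hsub : closedBall q (2 * √(Fintype.card ι)) ⊆ (3 : ℝ) • K := by
    simpa [show (3 : ℝ) - 1 = 2 by norm_num] using hK.closedBall_subset_smul hball hq
      (by norm_num : (1 : ℝ) < 3)
  calc (3 / 4 : ℝ) = 1 - Fintype.card ι / (2 * √(Fintype.card ι)) ^ 2 := by
        rw [mul_pow, sq_sqrt hn.le]; field_simp; norm_num
    _ ≤ ∫ x in closedBall 0 (2 * √(Fintype.card ι)), stdGaussianPDF ι x :=
        one_sub_card_div_sq_le_setIntegral_closedBall_stdGaussianPDF (by positivity)
    _ = ∫ x in closedBall q (2 * √(Fintype.card ι)), stdGaussianPDF ι (x - q) :=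
        (setIntegral_closedBall_stdGaussianPDF_sub q _).symm
    _ ≤ ∫ x in (3 : ℝ) • K, stdGaussianPDF ι (x - q) :=
        setIntegral_mono_set (integrable_stdGaussianPDF.comp_sub_right q).integrableOn
          (ae_of_all _ fun x => stdGaussianPDF_nonneg _) (ae_of_all _ hsub)

end StdGaussianPDF

/-- If `K ⊆ ℝⁿ` is convex and contains the ball `√n 𝔹_n`, and `p₁, …, p_M ∈ K`, then the
Gaussian mixture `f(x) = (1/M) ∑ γ_n(x - pᵢ)` satisfies `∫_{3K} f ≥ 3/4`. -/
theorem stmt_10 (n : ℕ) (hn : 1 ≤ n) (K : Set (EuclideanSpace ℝ (Fin n)))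
    (hK : Convex ℝ K)
    (hball : closedBall (0 : EuclideanSpace ℝ (Fin n)) (Real.sqrt n) ⊆ K)
    (M : ℕ) (hM : 1 ≤ M) (p : Fin M → EuclideanSpace ℝ (Fin n)) (hp : ∀ i, p i ∈ K)
    (f : EuclideanSpace ℝ (Fin n) → ℝ)
    (hf : ∀ x, f x = (1 / (M : ℝ)) *
      ∑ i, (2 * Real.pi) ^ (-(n : ℝ) / 2) * Real.exp (-‖x - p i‖ ^ 2 / 2)) :
    3 / 4 ≤ ∫ x in (3 : ℝ) • K, f x := by
  have : Nonempty (Fin n) := ⟨⟨0, hn⟩⟩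
  have hf' : f = fun x => 1 / (M : ℝ) * ∑ i, stdGaussianPDF (Fin n) (x - p i) := by
    funext x
    simp only [hf, stdGaussianPDF, Fintype.card_fin]
  have hmass (i : Fin M) : 3 / 4 ≤ ∫ x in (3 : ℝ) • K, stdGaussianPDF (Fin n) (x - p i) :=
    three_quarters_le_setIntegral_three_smul_stdGaussianPDF_sub hK (by simpa using hball) (hp i)
  rw [hf', integral_const_mul, integral_finsetSum _ fun i _ =>
    (integrable_stdGaussianPDF.comp_sub_right (p i)).integrableOn]
  have hM' : (0 : ℝ) < M := by exact_mod_cast hM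
  calc (3 / 4 : ℝ) = 1 / M * ∑ _i : Fin M, 3 / 4 := by
        rw [Finset.sum_const, Finset.card_univ, Fintype.card_fin, nsmul_eq_mul]
        field_simp
    _ ≤ _ := by gcongr with i; exact hmass i
end

section
/- There exists a universal constant c > 0 with the following property (Gluskin). For every n ≥ 1 and every m ≥ 2n, every convex polytope P ⊆ ℝⁿ contained in the closed Euclidean unit ball 𝔹_n and having at most m vertices (i.e., P is the convex hull of at most m points of 𝔹_n) satisfies vol_n(P) ≤ ( c · √(log(m/n)) / n )^n. -/
/-!
Maurey's empirical method: if `x` is a convex combination of points of `P ⊆ 𝔹_n`, one can pick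
`y₁, …, y_k ∈ P` one at a time so that `‖y₁ + ⋯ + y_j - j x‖² ≤ j` for every `j`, hence `x` lies
within `1 / √k` of the average of `k` points of `P`. So `conv P` is covered by
`C(m + k - 1, k)` balls of radius `1 / √k`. Comparing with a Gaussian, a ball of radius `r` has
volume at most `(√(2πe) r / √n) ^ n`. With `L = log (m / n)` and `k ≈ n / L` there are `exp (O(n))`
balls, each of volume at most `(√(2πe L) / n) ^ n`; when `L ≥ n` the unit ball itself suffices.
-/

open MeasureTheory Metric Real Module
open scoped RealInnerProductSpace

section Maurey

variable {E : Type*} [NormedAddCommGroup E] [InnerProductSpace ℝ E] {s : Finset E} {x : E} {R : ℝ}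

/-- `y ↦ ‖v + (y - x)‖² - ‖y‖²` is affine, so it is at most its value at `x` somewhere on `s`. -/
lemma exists_mem_norm_add_sub_sq_le (hx : x ∈ convexHull ℝ (s : Set E))
    (hs : (s : Set E) ⊆ closedBall 0 R) (v : E) :
    ∃ y ∈ s, ‖v + (y - x)‖ ^ 2 ≤ ‖v‖ ^ 2 + R ^ 2 := by
  have hconc : ConcaveOn ℝ Set.univ fun y ↦ ‖v - x‖ ^ 2 + ⟪2 • (v - x), y⟫ :=
    (concaveOn_const _ convex_univ).add ((innerₛₗ ℝ (2 • (v - x))).concaveOn convex_univ)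
  obtain ⟨y, hy, hle⟩ := hconc.exists_le_of_mem_convexHull (Set.subset_univ _) hx
  have hyR : ‖y‖ ^ 2 ≤ R ^ 2 :=
    pow_le_pow_left₀ (norm_nonneg y) (mem_closedBall_zero_iff.1 (hs hy)) 2
  have hexpand (z : E) : ‖v - x + z‖ ^ 2 = ‖v - x‖ ^ 2 + ⟪2 • (v - x), z⟫ + ‖z‖ ^ 2 := by
    rw [norm_add_sq_real, two_smul, inner_add_left]; ring
  have hx' := hexpand x
  rw [sub_add_cancel] at hx'
  refine ⟨y, hy, ?_⟩
  rw [← add_sub_assoc, add_sub_right_comm]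
  linarith [hexpand y, sq_nonneg ‖x‖]

lemma exists_sym_norm_sum_sub_smul_sq_le (hx : x ∈ convexHull ℝ (s : Set E))
    (hs : (s : Set E) ⊆ closedBall 0 R) (k : ℕ) :
    ∃ σ : Sym s k, ‖((σ : Multiset s).map Subtype.val).sum - (k : ℝ) • x‖ ^ 2 ≤ k * R ^ 2 := by
  induction k with
  | zero => exact ⟨Sym.nil, by simp⟩
  | succ k ih =>
    obtain ⟨σ, hσ⟩ := ih
    set S := ((σ : Multiset s).map Subtype.val).sum
    obtain ⟨y, hy, hle⟩ := exists_mem_norm_add_sub_sq_le hx hs (S - (k : ℝ) • x)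
    refine ⟨⟨y, hy⟩ ::ₛ σ, ?_⟩
    have hsum : y + S - ((k + 1 : ℕ) : ℝ) • x = S - (k : ℝ) • x + (y - x) := by
      push_cast; rw [add_smul, one_smul]; abel
    rw [Sym.coe_cons, Multiset.map_cons, Multiset.sum_cons]
    change ‖y + S - ((k + 1 : ℕ) : ℝ) • x‖ ^ 2 ≤ _
    rw [hsum]
    push_cast
    linarith

lemma convexHull_subset_iUnion_closedBall_s11 (hs : (s : Set E) ⊆ closedBall 0 R) {k : ℕ}
    (hk : k ≠ 0) :
    convexHull ℝ (s : Set E) ⊆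
      ⋃ σ : Sym s k, closedBall ((k : ℝ)⁻¹ • ((σ : Multiset s).map Subtype.val).sum) (R / √k) := by
  intro x hx
  obtain ⟨σ, hσ⟩ := exists_sym_norm_sum_sub_smul_sq_le hx hs k
  have hk' : (0 : ℝ) < k := by positivity
  have hR : 0 ≤ R := by
    obtain ⟨y, hy⟩ := convexHull_nonempty_iff.1 ⟨x, hx⟩
    exact nonneg_of_mem_closedBall (hs hy)
  refine Set.mem_iUnion.2 ⟨σ, ?_⟩
  set S := ((σ : Multiset s).map Subtype.val).sum
  have hnorm : ‖S - (k : ℝ) • x‖ ≤ √k * R := by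
    rw [← sqrt_sq hR, ← sqrt_mul hk'.le]
    exact le_sqrt_of_sq_le hσ
  have hcenter : (k : ℝ)⁻¹ • S - x = (k : ℝ)⁻¹ • (S - (k : ℝ) • x) := by
    rw [smul_sub, inv_smul_smul₀ hk'.ne']
  rw [mem_closedBall, dist_comm, dist_eq_norm, hcenter, norm_smul, norm_inv,
    norm_of_nonneg hk'.le]
  calc (k : ℝ)⁻¹ * ‖S - (k : ℝ) • x‖ ≤ (k : ℝ)⁻¹ * (√k * R) := by gcongr
    _ = R / √k := by field_simp; rw [sq_sqrt hk'.le]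

end Maurey

section Volume

variable {V : Type*} [NormedAddCommGroup V] [InnerProductSpace ℝ V] [FiniteDimensional ℝ V]
  [MeasurableSpace V] [BorelSpace V]

lemma volume_real_closedBall_mul_exp_le (x : V) (r : ℝ) {b : ℝ} (hb : 0 < b) :
    volume.real (closedBall x r) * exp (-b * r ^ 2) ≤ (π / b) ^ (finrank ℝ V / 2 : ℝ) := by
  have hint : ∫ v : V, exp (-b * ‖v‖ ^ 2) = (π / b) ^ (finrank ℝ V / 2 : ℝ) :=
    GaussianFourier.integral_rexp_neg_mul_sq_norm hb
  have hgauss : Integrable fun v : V ↦ exp (-b * ‖v‖ ^ 2) :=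
    .of_integral_ne_zero (by rw [hint]; positivity)
  rw [Measure.real, Measure.addHaar_closedBall_center, ← Measure.real, ← smul_eq_mul,
    ← setIntegral_const, ← hint]
  calc ∫ _ in closedBall (0 : V) r, exp (-b * r ^ 2)
      ≤ ∫ v in closedBall (0 : V) r, exp (-b * ‖v‖ ^ 2) := by
        refine setIntegral_mono_on ?_ hgauss.integrableOn measurableSet_closedBall fun v hv ↦ ?_
        · exact integrableOn_const measure_closedBall_lt_top.ne
        · have : ‖v‖ ^ 2 ≤ r ^ 2 := by
            rw [mem_closedBall_zero_iff] at hv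
            exact pow_le_pow_left₀ (norm_nonneg v) hv 2
          exact exp_le_exp.2 (by nlinarith)
    _ ≤ ∫ v, exp (-b * ‖v‖ ^ 2) :=
        setIntegral_le_integral hgauss (.of_forall fun _ ↦ (exp_pos _).le)

/-- The previous bound with the optimal `b = d / (2 r²)`. -/
lemma volume_real_closedBall_le (x : V) {r : ℝ} (hr : 0 < r) (hV : 0 < finrank ℝ V) :
    volume.real (closedBall x r) ≤ (√(2 * π * exp 1) * r / √(finrank ℝ V)) ^ finrank ℝ V := by
  set d := finrank ℝ V
  have hd : (0 : ℝ) < d := by exact_mod_cast hV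
  set b := (d : ℝ) / (2 * r ^ 2)
  have h := volume_real_closedBall_mul_exp_le x r (b := b) (by positivity)
  rw [← le_div_iff₀ (exp_pos _), div_eq_mul_inv, ← exp_neg,
    show -(-b * r ^ 2) = 1 * (d / 2) by simp only [b]; field_simp, exp_mul,
    ← mul_rpow (by positivity) (exp_pos _).le] at h
  refine h.trans_eq ?_
  have hsqrt : √(2 * π * exp 1) * r / √d = √(π / b * exp 1) := by
    rw [show π / b * exp 1 = 2 * π * exp 1 * r ^ 2 / d by simp only [b]; field_simp,
      sqrt_div' _ hd.le, sqrt_mul' _ (sq_nonneg r), sqrt_sq hr.le]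
  rw [hsqrt, sqrt_eq_rpow, ← rpow_natCast, ← rpow_mul (by positivity), one_div_mul_eq_div]

lemma volume_real_convexHull_le {s : Finset V} {R : ℝ} (hs : (s : Set V) ⊆ closedBall 0 R)
    {k : ℕ} (hk : k ≠ 0) :
    volume.real (convexHull ℝ (s : Set V)) ≤
      (s.card + k - 1).choose k * volume.real (closedBall (0 : V) (R / √k)) := by
  classical
  calc volume.real (convexHull ℝ (s : Set V))
      ≤ volume.real (⋃ σ : Sym s k,
          closedBall ((k : ℝ)⁻¹ • ((σ : Multiset s).map Subtype.val).sum) (R / √k)) :=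
        measureReal_mono (convexHull_subset_iUnion_closedBall_s11 hs hk)
          (isCompact_iUnion fun _ ↦ isCompact_closedBall _ _).measure_ne_top
    _ ≤ ∑ σ : Sym s k,
          volume.real (closedBall ((k : ℝ)⁻¹ • ((σ : Multiset s).map Subtype.val).sum) (R / √k)) :=
        measureReal_iUnion_fintype_le _
    _ = (s.card + k - 1).choose k * volume.real (closedBall (0 : V) (R / √k)) := by
        simp only [Measure.addHaar_real_closedBall_center, Finset.sum_const, Finset.card_univ,
          Sym.card_sym_eq_choose, Fintype.card_coe, nsmul_eq_mul]

end Volume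

lemma choose_le_exp_one_mul_div_pow (n k : ℕ) : (n.choose k : ℝ) ≤ (exp 1 * n / k) ^ k := by
  rcases Nat.eq_zero_or_pos k with rfl | hk
  · simp
  have hk' : (0 : ℝ) < k := by exact_mod_cast hk
  calc (n.choose k : ℝ) ≤ n ^ k / k.factorial := Nat.choose_le_pow_div k n
    _ = (n / k) ^ k * (k ^ k / k.factorial) := by rw [div_pow]; field_simp
    _ ≤ (n / k) ^ k * exp k := by gcongr; exact pow_div_factorial_le_exp _ hk'.le _
    _ = (exp 1 * n / k) ^ k := by rw [← exp_one_pow, ← mul_pow]; ring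

lemma exists_nat_le_mul_le_two_mul {a b : ℝ} (ha : 0 < a) (hab : a ≤ b) :
    ∃ k : ℕ, b ≤ k * a ∧ k * a ≤ 2 * b := by
  refine ⟨⌈b / a⌉₊, (div_le_iff₀ ha).1 (Nat.le_ceil _), ?_⟩
  have hceil := Nat.ceil_lt_add_one (div_nonneg (ha.le.trans hab) ha.le)
  calc (⌈b / a⌉₊ : ℝ) * a ≤ (b / a + 1) * a := by gcongr
    _ = b + a := by field_simp
    _ ≤ 2 * b := by linarith

/-- Each factor of `(e (m + k) / k) ^ k` is at most `e · (m / n) · e ^ L = exp (1 + 2 L)`, where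
`L = log (m / n)`. -/
lemma choose_add_sub_one_le_exp {n m k : ℕ} (hn : 0 < n) (hm : 2 * n ≤ m)
    (hlow : (n : ℝ) ≤ k * log (m / n)) (hup : k * log (m / n) ≤ 2 * n) :
    ((m + k - 1).choose k : ℝ) ≤ exp (7 * n) := by
  set t : ℝ := m / n
  set L := log t
  have hn' : (0 : ℝ) < n := by exact_mod_cast hn
  have ht : 2 ≤ t := by rw [le_div_iff₀ hn']; exact_mod_cast (by omega : 2 * n ≤ m)
  have hL : 2 / 3 ≤ L := (show (2 / 3 : ℝ) ≤ log 2 by linarith [log_two_gt_d9]).trans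
    (log_le_log two_pos ht)
  have hk : (0 : ℝ) < k := by
    rcases Nat.eq_zero_or_pos k with rfl | hk
    · simp at hlow; linarith
    · exact_mod_cast hk
  have hmk : (m : ℝ) / k ≤ t * L := by
    rw [div_le_iff₀ hk, mul_assoc, mul_comm L]
    calc (m : ℝ) = t * n := by simp only [t]; field_simp
      _ ≤ t * (k * L) := by gcongr
  have hbase : exp 1 * ((m + k - 1 : ℕ) : ℝ) / k ≤ exp (1 + 2 * L) :=
    calc exp 1 * ((m + k - 1 : ℕ) : ℝ) / k ≤ exp 1 * (m / k + 1) := by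
          rw [mul_div_assoc, div_add_one hk.ne']
          gcongr
          exact_mod_cast Nat.sub_le (m + k) 1
      _ ≤ exp 1 * (t * exp L) := by
          gcongr
          nlinarith [add_one_le_exp L]
      _ = exp (1 + 2 * L) := by
          rw [exp_add, two_mul, exp_add, exp_log (by positivity : (0 : ℝ) < t)]
  calc ((m + k - 1).choose k : ℝ) ≤ (exp 1 * ((m + k - 1 : ℕ) : ℝ) / k) ^ k :=
        choose_le_exp_one_mul_div_pow _ _
    _ ≤ exp (1 + 2 * L) ^ k := by gcongr
    _ = exp (k * (1 + 2 * L)) := by rw [← exp_nat_mul]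
    _ ≤ exp (7 * n) := exp_le_exp.2 (by nlinarith)

lemma EuclideanSpace.volume_real_closedBall_le {n : ℕ} (hn : 0 < n)
    (x : EuclideanSpace ℝ (Fin n)) {r : ℝ} (hr : 0 < r) :
    volume.real (closedBall x r) ≤ (√(2 * π * exp 1) * r / √n) ^ n := by
  simpa only [finrank_euclideanSpace_fin] using
    _root_.volume_real_closedBall_le x hr (by rwa [finrank_euclideanSpace_fin])

lemma one_div_sqrt_mul_sqrt_le_sqrt_div {a n L : ℝ} (ha : 0 < a) (hn : 0 < n) (h : n ≤ a * L) :
    1 / (√a * √n) ≤ √L / n := by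
  rw [div_le_div_iff₀ (by positivity) hn]
  calc 1 * n = √n * √n := by rw [one_mul, mul_self_sqrt hn.le]
    _ ≤ √(a * L) * √n := by gcongr
    _ = √L * (√a * √n) := by rw [sqrt_mul ha.le]; ring

section Polytope

variable {n : ℕ} {P : Finset (EuclideanSpace ℝ (Fin n))}

lemma volume_real_convexHull_le_of_dim_le (hn : 0 < n)
    (hP : (P : Set (EuclideanSpace ℝ (Fin n))) ⊆ closedBall 0 1) {L : ℝ} (hL : n ≤ L) :
    volume.real (convexHull ℝ (P : Set (EuclideanSpace ℝ (Fin n)))) ≤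
      (√(2 * π * exp 1) * √L / n) ^ n := by
  have hn' : (0 : ℝ) < n := by exact_mod_cast hn
  calc volume.real (convexHull ℝ (P : Set (EuclideanSpace ℝ (Fin n))))
      ≤ volume.real (closedBall (0 : EuclideanSpace ℝ (Fin n)) 1) :=
        measureReal_mono (convexHull_min hP (convex_closedBall 0 1)) measure_closedBall_lt_top.ne
    _ ≤ (√(2 * π * exp 1) * 1 / √n) ^ n := EuclideanSpace.volume_real_closedBall_le hn 0 one_pos
    _ = (√(2 * π * exp 1) * (1 / (√1 * √n))) ^ n := by rw [sqrt_one]; ring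
    _ ≤ (√(2 * π * exp 1) * (√L / n)) ^ n := by
        gcongr (_ * ?_) ^ n
        exact one_div_sqrt_mul_sqrt_le_sqrt_div one_pos hn' (by linarith)
    _ = (√(2 * π * exp 1) * √L / n) ^ n := by ring

lemma volume_real_convexHull_le_of_log_lt (hn : 0 < n) {m : ℕ} (hm : 2 * n ≤ m)
    (hcard : P.card ≤ m) (hP : (P : Set (EuclideanSpace ℝ (Fin n))) ⊆ closedBall 0 1)
    (hL : log (m / n) < n) :
    volume.real (convexHull ℝ (P : Set (EuclideanSpace ℝ (Fin n)))) ≤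
      (exp 7 * √(2 * π * exp 1) * √(log (m / n)) / n) ^ n := by
  set L := log ((m : ℝ) / n)
  have hn' : (0 : ℝ) < n := by exact_mod_cast hn
  have hL0 : 0 < L := log_pos <| (one_lt_div hn').2 <| by exact_mod_cast (by omega : n < m)
  obtain ⟨k, hlow, hup⟩ := exists_nat_le_mul_le_two_mul hL0 hL.le
  have hk : k ≠ 0 := by rintro rfl; simp at hlow; linarith
  have hcount : ((P.card + k - 1).choose k : ℝ) ≤ exp (7 * n) :=
    (Nat.cast_le.2 (Nat.choose_le_choose k (by omega))).trans
      (choose_add_sub_one_le_exp hn hm hlow hup)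
  calc volume.real (convexHull ℝ (P : Set (EuclideanSpace ℝ (Fin n))))
      ≤ (P.card + k - 1).choose k *
          volume.real (closedBall (0 : EuclideanSpace ℝ (Fin n)) (1 / √k)) :=
        volume_real_convexHull_le hP hk
    _ ≤ exp (7 * n) * (√(2 * π * exp 1) * (1 / √k) / √n) ^ n := by
        gcongr
        exact EuclideanSpace.volume_real_closedBall_le hn 0 (by positivity)
    _ = (exp 7 * √(2 * π * exp 1) * (1 / (√k * √n))) ^ n := by
        rw [mul_comm 7, exp_nat_mul, ← mul_pow]; ring
    _ ≤ (exp 7 * √(2 * π * exp 1) * (√L / n)) ^ n := by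
        gcongr (_ * ?_) ^ n
        exact one_div_sqrt_mul_sqrt_le_sqrt_div (by positivity) hn' hlow
    _ = (exp 7 * √(2 * π * exp 1) * √L / n) ^ n := by ring

end Polytope

/-- (Gluskin) There is a universal `c > 0` such that every convex polytope contained in
the unit ball `𝔹_n ⊆ ℝⁿ` with at most `m ≥ 2n` vertices has volume at most
`(c √(log (m/n)) / n)^n`. -/
theorem stmt_11 :
    ∃ c : ℝ, 0 < c ∧ ∀ n : ℕ, 1 ≤ n → ∀ m : ℕ, 2 * n ≤ m →
      ∀ P : Finset (EuclideanSpace ℝ (Fin n)),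
        P.card ≤ m → (P : Set (EuclideanSpace ℝ (Fin n))) ⊆ closedBall 0 1 →
        (volume (convexHull ℝ (P : Set (EuclideanSpace ℝ (Fin n))))).toReal
          ≤ (c * Real.sqrt (Real.log ((m : ℝ) / n)) / n) ^ n := by
  refine ⟨exp 7 * √(2 * π * exp 1), by positivity, fun n hn m hm P hcard hP ↦ ?_⟩
  rcases le_or_gt (n : ℝ) (log (m / n)) with hL | hL
  · calc volume.real (convexHull ℝ (P : Set (EuclideanSpace ℝ (Fin n))))
        ≤ (√(2 * π * exp 1) * √(log (m / n)) / n) ^ n :=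
          volume_real_convexHull_le_of_dim_le hn hP hL
      _ ≤ (exp 7 * √(2 * π * exp 1) * √(log (m / n)) / n) ^ n := by
          gcongr
          exact le_mul_of_one_le_left (by positivity) (one_le_exp (by norm_num))
  · exact volume_real_convexHull_le_of_log_lt hn hm hcard hP hL
end
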